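/- Let 𝒜 be a commutative Banach algebra and X ⊆ 𝒜* a topologically introverted closed invariant subspace. Equip X* with the product ⟨m⊙n, T⟩ = ⟨m, n⊙T⟩. If X ⊆ WAP(𝒜), then the algebra (X*, ⊙) is commutative. -/

import Mathlib

open NormedSpace

/-- The dual module action: `⟨u·T, v⟩ = ⟨T, v * u⟩`. -/
noncomputable def dualAct {A : Type*} [NormedCommRing A] [NormedAlgebra ℂ A]
    (u : A) (T : StrongDual ℂ A) : StrongDual ℂ A :=
  T.comp ((ContinuousLinearMap.mul ℂ A).flip u)

/-- `T` is weakly almost periodic. -/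
def IsWAP {A : Type*} [NormedCommRing A] [NormedAlgebra ℂ A] (T : StrongDual ℂ A) : Prop :=
  IsCompact (closure (toWeakSpace ℂ (StrongDual ℂ A) ''
    {S : StrongDual ℂ A | ∃ u : A, ‖u‖ ≤ 1 ∧ S = dualAct u T}))

open Set Filter Topology

section Auxiliary

variable {F : Type*} [NormedAddCommGroup F] [NormedSpace ℂ F]

instance : IsScalarTower ℝ ℂ (WeakDual ℂ F) := inferInstanceAs (IsScalarTower ℝ ℂ (F →L[ℂ] ℂ))
instance : LocallyConvexSpace ℝ (WeakDual ℂ F) :=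
  inferInstanceAs (LocallyConvexSpace ℝ (WeakBilin (topDualPairing ℂ F)))

/-- Every continuous linear functional on the weak-star dual is evaluation at a point. -/
theorem weakDual_dual_eval (f : WeakDual ℂ F →L[ℂ] ℂ) :
    ∃ S : F, ∀ χ : WeakDual ℂ F, f χ = χ S := by
  have hb := (topDualPairing ℂ F).hasBasis_weakBilin
  have hU : f ⁻¹' Metric.ball 0 1 ∈ nhds (0 : WeakDual ℂ F) := by
    have := f.continuous.tendsto 0
    simpa using this (Metric.ball_mem_nhds _ one_pos)
  obtain ⟨V, hV, hVU⟩ := hb.mem_iff.mp hU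
  obtain ⟨s, r, hr, rfl⟩ := (SeminormFamily.basisSets_iff _).mp hV
  -- evaluation functionals
  let E : F →ₗ[ℂ] (WeakDual ℂ F →ₗ[ℂ] ℂ) := (topDualPairing ℂ F).flip
  have hker : ⨅ (y : s), LinearMap.ker (E y) ≤ LinearMap.ker (f : WeakDual ℂ F →ₗ[ℂ] ℂ) := by
    intro χ hχ
    simp only [Submodule.mem_iInf, LinearMap.mem_ker] at hχ ⊢
    have key : ∀ t : ℝ, 0 < t → ‖f ((t : ℂ) • χ)‖ < 1 := by
      intro t ht
      have hmem : (t : ℂ) • χ ∈ (s.sup (topDualPairing ℂ F).toSeminormFamily).ball 0 r := by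
        apply (Seminorm.mem_ball_zero _).mpr
        refine Seminorm.finset_sup_apply_lt hr fun y hy => ?_
        show ‖(E y) ((t : ℂ) • χ)‖ < r
        rw [map_smul, hχ ⟨y, hy⟩, smul_zero, norm_zero]; exact hr
      have h2 : f ((t : ℂ) • χ) ∈ Metric.ball (0 : ℂ) 1 := hVU hmem
      exact mem_ball_zero_iff.mp h2
    by_contra h
    have h0 : (0:ℝ) < ‖f χ‖ := norm_pos_iff.mpr h
    have := key (2 / ‖f χ‖) (by positivity)
    rw [map_smul, norm_smul] at this
    simp only [Complex.norm_real, Real.norm_eq_abs] at this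
    rw [abs_of_pos (by positivity)] at this
    rw [div_mul_cancel₀] at this <;> [linarith; positivity]
  have hspan := mem_span_of_iInf_ker_le_ker (𝕜 := ℂ) hker
  have hle : Submodule.span ℂ (range fun y : s => E y) ≤ LinearMap.range E := by
    rw [Submodule.span_le]
    rintro - ⟨y, rfl⟩
    exact ⟨y, rfl⟩
  obtain ⟨S, hS⟩ := hle hspan
  exact ⟨S, fun χ => (LinearMap.congr_fun hS χ).symm⟩

theorem goldstine {A : Type*} [NormedAddCommGroup A] [NormedSpace ℂ A]
    (φ : StrongDual ℂ (StrongDual ℂ A)) (hφ : ‖φ‖ ≤ 1) :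
    StrongDual.toWeakDual φ ∈
      closure ((fun v => StrongDual.toWeakDual (inclusionInDoubleDual ℂ A v)) '' Metric.closedBall 0 1) := by
  set g : A → WeakDual ℂ (StrongDual ℂ A) := fun v => StrongDual.toWeakDual (inclusionInDoubleDual ℂ A v) with hg
  have hgl : IsLinearMap ℝ g := by
    constructor <;> intro x y <;> simp [hg, map_add, map_smul] <;> rfl
  have hconv : Convex ℝ (closure (g '' Metric.closedBall 0 1)) :=
    @Convex.closure ℝ (WeakDual ℂ (StrongDual ℂ A)) _ _ _ _ _ _ (WeakDual.instContinuousConstSMul ℝ) _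
      ((convex_closedBall (0:A) 1).is_linear_image hgl)
  by_contra h
  obtain ⟨f, u, hfa, hfx⟩ :=
    RCLike.geometric_hahn_banach_closed_point (𝕜 := ℂ) hconv isClosed_closure h
  obtain ⟨S, hS⟩ := weakDual_dual_eval f
  have hmem : ∀ v : A, ‖v‖ ≤ 1 → g v ∈ closure (g '' Metric.closedBall 0 1) :=
    fun v hv => subset_closure ⟨v, by simpa [Metric.mem_closedBall] using hv, rfl⟩
  have heval : ∀ v : A, (g v) S = S v := fun v => rfl
  have hre : ∀ v : A, ‖v‖ ≤ 1 → Complex.re (S v) < u := by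
    intro v hv
    have := hfa (g v) (hmem v hv)
    rwa [hS, heval] at this
  have hu0 : 0 < u := by simpa using hre 0 (by simp)
  have hball : ∀ v : A, ‖v‖ ≤ 1 → ‖S v‖ ≤ u := by
    intro v hv
    rcases eq_or_ne (S v) 0 with h0 | h0
    · simp [h0, hu0.le]
    · set c : ℂ := (‖S v‖ : ℂ) / (S v) with hc
      have hcabs : ‖c‖ = 1 := by
        rw [hc, norm_div, Complex.norm_real, Real.norm_eq_abs, abs_norm,
          div_self (norm_ne_zero_iff.mpr h0)]
      have hcv : ‖c • v‖ ≤ 1 := by rw [norm_smul, hcabs, one_mul]; exact hv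
      have := hre (c • v) hcv
      rw [map_smul, smul_eq_mul, hc, div_mul_cancel₀ _ h0] at this
      simpa using this.le
  have hSnorm : ‖S‖ ≤ u := by
    refine ContinuousLinearMap.opNorm_le_bound S hu0.le fun v => ?_
    rcases eq_or_ne v 0 with rfl | hv
    · simp
    · have hnv : (0:ℝ) < ‖v‖ := norm_pos_iff.mpr hv
      have h1 : ‖((‖v‖ : ℂ))⁻¹ • v‖ ≤ 1 := by
        rw [norm_smul, norm_inv, Complex.norm_real, Real.norm_eq_abs, abs_of_pos hnv,
          inv_mul_cancel₀ hnv.ne']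
      have h2 := hball _ h1
      rw [map_smul, smul_eq_mul, norm_mul, norm_inv, Complex.norm_real, Real.norm_eq_abs,
        abs_of_pos hnv] at h2
      calc ‖S v‖ = ‖v‖ * (‖v‖⁻¹ * ‖S v‖) := by field_simp
        _ ≤ ‖v‖ * u := mul_le_mul_of_nonneg_left h2 hnv.le
        _ = u * ‖v‖ := mul_comm _ _
  have hcontr : Complex.re (f (StrongDual.toWeakDual φ)) ≤ u := by
    rw [hS]
    have h1 : Complex.re ((StrongDual.toWeakDual φ) S) ≤ ‖φ S‖ := Complex.re_le_norm _
    have h2 : ‖φ S‖ ≤ ‖φ‖ * ‖S‖ := φ.le_opNorm S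
    have h3 : ‖φ‖ * ‖S‖ ≤ 1 * u := mul_le_mul hφ hSnorm (norm_nonneg _) zero_le_one
    linarith [h1, h2, h3]
  exact absurd hfx (not_lt.mpr hcontr)

theorem key {A : Type*} [NormedAddCommGroup A] [NormedSpace ℂ A]
    (L : A →L[ℂ] StrongDual ℂ A) (hsym : ∀ u v : A, L u v = L v u)
    (hK : IsCompact (closure (toWeakSpace ℂ (StrongDual ℂ A) '' (⇑L '' Metric.closedBall 0 1))))
    (φ ψ : StrongDual ℂ (StrongDual ℂ A)) (hφ : ‖φ‖ ≤ 1) :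
    φ (ψ.comp L) = ψ (φ.comp L) := by
  classical
  set g : A → WeakDual ℂ (StrongDual ℂ A) :=
    fun v => StrongDual.toWeakDual (inclusionInDoubleDual ℂ A v) with hg
  -- transpose of J v under L is L v
  have hJL : ∀ v : A, (WeakDual.toStrongDual (g v)).comp L = L v := by
    intro v
    ext u
    exact hsym u v
  obtain ⟨𝒰, hD, hlim⟩ := mem_closure_iff_ultrafilter.mp (goldstine φ hφ)
  -- the map χ ↦ χ ∘ L, landing in the weak topology σ(A', A'')
  set e2 : WeakDual ℂ (StrongDual ℂ A) → WeakSpace ℂ (StrongDual ℂ A) :=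
    fun χ => toWeakSpace ℂ (StrongDual ℂ A) ((WeakDual.toStrongDual χ).comp L) with he2
  set 𝒲 : Ultrafilter (WeakSpace ℂ (StrongDual ℂ A)) := 𝒰.map e2 with h𝒲
  have hKW : closure (toWeakSpace ℂ (StrongDual ℂ A) '' (⇑L '' Metric.closedBall 0 1)) ∈ 𝒲 := by
    refine Ultrafilter.mem_map.mpr (mem_of_superset hD ?_)
    rintro - ⟨v, hv, rfl⟩
    refine subset_closure ⟨L v, ⟨v, hv, rfl⟩, ?_⟩
    simp only [he2, hJL v]
    exact congrArg _ (hJL v).symm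
  obtain ⟨x, hxK, hxlim⟩ := hK.ultrafilter_le_nhds 𝒲 (le_principal_iff.mpr hKW)
  -- identify the limit x with φ ∘ L
  have he3cont : Continuous (fun S : WeakSpace ℂ (StrongDual ℂ A) =>
      StrongDual.toWeakDual ((toWeakSpace ℂ (StrongDual ℂ A)).symm S) : WeakSpace ℂ (StrongDual ℂ A) → WeakDual ℂ A) := by
    refine WeakBilin.continuous_of_continuous_eval _ fun u => ?_
    exact WeakBilin.eval_continuous ((topDualPairing ℂ (StrongDual ℂ A)).flip)
      (inclusionInDoubleDual ℂ A u)
  have hΛcont : Continuous (fun χ : WeakDual ℂ (StrongDual ℂ A) =>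
      StrongDual.toWeakDual ((WeakDual.toStrongDual χ).comp L) : WeakDual ℂ (StrongDual ℂ A) → WeakDual ℂ A) := by
    refine WeakBilin.continuous_of_continuous_eval _ fun u => ?_
    exact WeakBilin.eval_continuous (topDualPairing ℂ (StrongDual ℂ A)) (L u)
  have hxy : x = toWeakSpace ℂ (StrongDual ℂ A) (φ.comp L) := by
    have t1 : Tendsto (fun S : WeakSpace ℂ (StrongDual ℂ A) =>
        StrongDual.toWeakDual ((toWeakSpace ℂ (StrongDual ℂ A)).symm S)) 𝒲
        (𝓝 (StrongDual.toWeakDual ((toWeakSpace ℂ (StrongDual ℂ A)).symm x))) :=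
      he3cont.continuousAt.mono_left hxlim
    have t2 : Tendsto (fun χ : WeakDual ℂ (StrongDual ℂ A) =>
        StrongDual.toWeakDual ((WeakDual.toStrongDual χ).comp L)) 𝒰
        (𝓝 (StrongDual.toWeakDual ((WeakDual.toStrongDual (StrongDual.toWeakDual φ)).comp L))) :=
      hΛcont.continuousAt.mono_left hlim
    have heq : (fun S : WeakSpace ℂ (StrongDual ℂ A) =>
        StrongDual.toWeakDual ((toWeakSpace ℂ (StrongDual ℂ A)).symm S)) ∘ e2 =
        fun χ : WeakDual ℂ (StrongDual ℂ A) =>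
        StrongDual.toWeakDual ((WeakDual.toStrongDual χ).comp L) := by
      funext χ
      simp only [Function.comp, he2, LinearEquiv.symm_apply_apply]
    have t1' : Tendsto (fun χ : WeakDual ℂ (StrongDual ℂ A) =>
        StrongDual.toWeakDual ((WeakDual.toStrongDual χ).comp L)) 𝒰
        (𝓝 (StrongDual.toWeakDual ((toWeakSpace ℂ (StrongDual ℂ A)).symm x))) := by
      have tm : Tendsto e2 ↑𝒰 ↑𝒲 := by rw [h𝒲, Ultrafilter.coe_map]; exact tendsto_map
      rw [← heq]
      exact t1.comp tm
    have := tendsto_nhds_unique t1' t2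
    have hx' : (toWeakSpace ℂ (StrongDual ℂ A)).symm x =
        (WeakDual.toStrongDual (StrongDual.toWeakDual φ)).comp L :=
      StrongDual.toWeakDual.injective this
    rw [← LinearEquiv.symm_apply_eq] at *
    rw [hx']
    rfl
  -- ψ is weakly continuous
  have hψcont : Continuous (fun S : WeakSpace ℂ (StrongDual ℂ A) =>
      ψ ((toWeakSpace ℂ (StrongDual ℂ A)).symm S)) :=
    WeakBilin.eval_continuous ((topDualPairing ℂ (StrongDual ℂ A)).flip) ψ
  have t3 : Tendsto (fun χ : WeakDual ℂ (StrongDual ℂ A) =>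
      ψ ((WeakDual.toStrongDual χ).comp L)) 𝒰 (𝓝 (ψ (φ.comp L))) := by
    have := hψcont.continuousAt.mono_left hxlim
    rw [hxy] at this
    simp only [LinearEquiv.symm_apply_apply] at this
    have heq : (fun S : WeakSpace ℂ (StrongDual ℂ A) => ψ ((toWeakSpace ℂ (StrongDual ℂ A)).symm S)) ∘ e2 =
        fun χ : WeakDual ℂ (StrongDual ℂ A) => ψ ((WeakDual.toStrongDual χ).comp L) := by
      funext χ
      simp only [Function.comp, he2, LinearEquiv.symm_apply_apply]
    have tm : Tendsto e2 ↑𝒰 ↑𝒲 := by rw [h𝒲, Ultrafilter.coe_map]; exact tendsto_map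
    have := this.comp tm
    rwa [heq] at this
  have t4 : Tendsto (fun χ : WeakDual ℂ (StrongDual ℂ A) => χ (ψ.comp L)) 𝒰 (𝓝 (φ (ψ.comp L))) := by
    have hcont : Continuous (fun χ : WeakDual ℂ (StrongDual ℂ A) => χ (ψ.comp L)) :=
      WeakBilin.eval_continuous (topDualPairing ℂ (StrongDual ℂ A)) (ψ.comp L)
    exact hcont.continuousAt.tendsto.comp hlim
  -- the two functions agree on the image of the ball
  have hagree : (fun χ : WeakDual ℂ (StrongDual ℂ A) => ψ ((WeakDual.toStrongDual χ).comp L)) =ᶠ[↑𝒰]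
      fun χ : WeakDual ℂ (StrongDual ℂ A) => χ (ψ.comp L) := by
    filter_upwards [hD]
    rintro - ⟨v, hv, rfl⟩
    rw [hJL v]
    rfl
  exact (tendsto_nhds_unique (t3.congr' hagree) t4).symm

theorem key' {A : Type*} [NormedAddCommGroup A] [NormedSpace ℂ A]
    (L : A →L[ℂ] StrongDual ℂ A) (hsym : ∀ u v : A, L u v = L v u)
    (hK : IsCompact (closure (toWeakSpace ℂ (StrongDual ℂ A) '' (⇑L '' Metric.closedBall 0 1))))
    (φ ψ : StrongDual ℂ (StrongDual ℂ A)) :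
    φ (ψ.comp L) = ψ (φ.comp L) := by
  rcases eq_or_ne φ 0 with rfl | hφ0
  · simp
  · have hnφ : (0:ℝ) < ‖φ‖ := (norm_nonneg φ).lt_of_ne' fun h => hφ0 (φ.opNorm_zero_iff.mp h)
    set c : ℂ := (‖φ‖ : ℂ) with hc
    have hc0 : c ≠ 0 := by
      simp [hc, Complex.ofReal_ne_zero, hnφ.ne']
    set φ' : StrongDual ℂ (StrongDual ℂ A) := c⁻¹ • φ with hφ'
    have hφ'norm : ‖φ'‖ ≤ 1 := by
      have hns : ‖c⁻¹ • φ‖ = ‖c⁻¹‖ * ‖φ‖ := @norm_smul _ _ _ _ _ NormedSpace.toNormSMulClass c⁻¹ φ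
      rw [hφ', hns, norm_inv, hc, Complex.norm_real, Real.norm_eq_abs, abs_of_pos hnφ,
        inv_mul_cancel₀ hnφ.ne']
    have hkey := key L hsym hK φ' ψ hφ'norm
    have hback : c • φ' = φ := by rw [hφ', smul_inv_smul₀ hc0]
    calc φ (ψ.comp L) = (c • φ') (ψ.comp L) := by rw [hback]
      _ = c * (φ' (ψ.comp L)) := rfl
      _ = c * (ψ (φ'.comp L)) := by rw [hkey]
      _ = ψ (c • (φ'.comp L)) := by rw [map_smul]; rfl
      _ = ψ ((c • φ').comp L) := by congr 1
      _ = ψ (φ.comp L) := by rw [hback]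

end Auxiliary

/-- if `X` is a topologically introverted closed invariant subspace of `A*`
with `X ⊆ WAP(A)`, then the Arens-type product `⟨m⊙n, T⟩ = ⟨m, n⊙T⟩` on `X*` is
commutative: whenever `Sm, Sn ∈ X` represent `m⊙T` and `n⊙T` (that is,
`⟨Sm, u⟩ = ⟨m, u·T⟩` and `⟨Sn, u⟩ = ⟨n, u·T⟩` for all `u`), one has
`⟨m, Sn⟩ = ⟨n, Sm⟩`, i.e. `⟨m⊙n, T⟩ = ⟨n⊙m, T⟩`. -/
theorem introverted_subspace_of_WAP_dual_commutative
    (A : Type*) [NormedCommRing A] [NormedAlgebra ℂ A] [CompleteSpace A]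
    (X : Submodule ℂ (StrongDual ℂ A)) (hXclosed : IsClosed (X : Set (StrongDual ℂ A)))
    (hinv : ∀ (u : A) (T : StrongDual ℂ A), T ∈ X → dualAct u T ∈ X)
    (hintro : ∀ (m : X →L[ℂ] ℂ) (T : StrongDual ℂ A) (hT : T ∈ X),
      ∃ S ∈ X, ∀ u : A, S u = m ⟨dualAct u T, hinv u T hT⟩)
    (hWAP : ∀ T ∈ X, IsWAP T)
    (m n : X →L[ℂ] ℂ) (T : StrongDual ℂ A) (hT : T ∈ X)
    (Sm Sn : StrongDual ℂ A) (hSmX : Sm ∈ X) (hSnX : Sn ∈ X)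
    (hSm : ∀ u : A, Sm u = m ⟨dualAct u T, hinv u T hT⟩)
    (hSn : ∀ u : A, Sn u = n ⟨dualAct u T, hinv u T hT⟩) :
    m ⟨Sn, hSnX⟩ = n ⟨Sm, hSmX⟩ := by
  classical
  -- the operator u ↦ u · T
  set L : A →L[ℂ] StrongDual ℂ A :=
    ((ContinuousLinearMap.compL ℂ A A ℂ) T).comp (ContinuousLinearMap.mul ℂ A).flip with hLdef
  have hL : ∀ u : A, L u = dualAct u T := fun u => rfl
  have hsym : ∀ u v : A, L u v = L v u := by
    intro u v
    show T (v * u) = T (u * v)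
    rw [mul_comm]
  have hset : {S : StrongDual ℂ A | ∃ u : A, ‖u‖ ≤ 1 ∧ S = dualAct u T} =
      ⇑L '' Metric.closedBall 0 1 := by
    ext S
    constructor
    · rintro ⟨u, hu, rfl⟩
      exact ⟨u, by simpa [Metric.mem_closedBall] using hu, (hL u).symm ▸ rfl⟩
    · rintro ⟨u, hu, rfl⟩
      exact ⟨u, by simpa [Metric.mem_closedBall] using hu, (hL u).symm⟩
  have hK : IsCompact (closure (toWeakSpace ℂ (StrongDual ℂ A) '' (⇑L '' Metric.closedBall 0 1))) := by
    have := hWAP T hT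
    rwa [IsWAP, hset] at this
  -- Hahn–Banach extensions of m and n
  obtain ⟨m', hm', -⟩ := exists_extension_norm_eq X m
  obtain ⟨n', hn', -⟩ := exists_extension_norm_eq X n
  have hSm' : Sm = m'.comp L := by
    ext u
    rw [hSm u, ContinuousLinearMap.comp_apply, hL u, ← hm' ⟨dualAct u T, hinv u T hT⟩]
  have hSn' : Sn = n'.comp L := by
    ext u
    rw [hSn u, ContinuousLinearMap.comp_apply, hL u, ← hn' ⟨dualAct u T, hinv u T hT⟩]
  have hmain := key' L hsym hK m' n'
  calc m ⟨Sn, hSnX⟩ = m' Sn := (hm' ⟨Sn, hSnX⟩).symm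
    _ = m' (n'.comp L) := by rw [hSn']
    _ = n' (m'.comp L) := hmain
    _ = n' Sm := by rw [hSm']
    _ = n ⟨Sm, hSmX⟩ := hn' ⟨Sm, hSmX⟩
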